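/- Let D be an acyclic digraph in which every directed path has finite length, coloured by c : E(D) → {1,...,r}, and such that for each colour i no monochromatic directed path of colour i has length ℓᵢ. For each vertex w and each m ≤ r, recursively define the class of w as the tuple (i₁,...,i_r) where i_m is the length of the longest directed path of colour m starting at w inside the set of vertices with class-prefix (i₁,...,i_{m−1}). Then whenever (w,w′) ∈ E(D) and w, w′ have classes agreeing in the first j coordinates, the colour of (w,w′) exceeds j. -/
import Mathlib


/-- A digraph (given by its edge relation `R`) contains a directed cycle. -/
def HasCycle {V : Type*} (R : V → V → Prop) : Prop :=
  ∃ (m : ℕ) (v : Fin (m + 1) → V), Function.Injective v ∧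
    (∀ i : Fin m, R (v i.castSucc) (v i.succ)) ∧ R (v (Fin.last m)) (v 0)

/-- Claim 2 of the stability theorem of Bürger–DeBiasio–Guggiari–Pitz.
Let `D` be an acyclic digraph with edge-colouring `c` in `r` colours (colour
`m : Fin r` stands for colour `m + 1` of the paper) in which no monochromatic
directed path of colour `m` has length `ℓ m`. Let `g` assign to each vertex `w`
its class tuple: `g w m` is the length of the longest directed path of colour
`m` starting at `w` inside the set of vertices whose class agrees with that of
`w` in all coordinates before `m`. Then whenever `(w, w')` is an edge and the
classes of `w` and `w'` agree in the first `j` coordinates, the colour of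
`(w, w')` exceeds `j`. -/
theorem stmt15 {V : Type*} (r : ℕ) (E : V → V → Prop) (c : V → V → Fin r)
    (ℓ : Fin r → ℕ) (hℓ : ∀ i, 0 < ℓ i)
    (hacyc : ¬HasCycle E)
    (hnopath : ∀ i : Fin r, ¬∃ v : Fin (ℓ i + 1) → V, Function.Injective v ∧
      ∀ j : Fin (ℓ i), E (v j.castSucc) (v j.succ) ∧
        c (v j.castSucc) (v j.succ) = i)
    (g : V → Fin r → ℕ)
    (hg : ∀ (w : V) (m : Fin r),
      (∃ p : Fin (g w m + 1) → V, Function.Injective p ∧ p 0 = w ∧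
        (∀ t, ∀ m' : Fin r, m' < m → g (p t) m' = g w m') ∧
        ∀ t : Fin (g w m), E (p t.castSucc) (p t.succ) ∧
          c (p t.castSucc) (p t.succ) = m) ∧
      ∀ j : ℕ, (∃ p : Fin (j + 1) → V, Function.Injective p ∧ p 0 = w ∧
        (∀ t, ∀ m' : Fin r, m' < m → g (p t) m' = g w m') ∧
        ∀ t : Fin j, E (p t.castSucc) (p t.succ) ∧
          c (p t.castSucc) (p t.succ) = m) → j ≤ g w m)
    (w w' : V) (hww' : E w w') (j : ℕ) (hj : j ≤ r)
    (hagree : ∀ m : Fin r, (m : ℕ) < j → g w m = g w' m) :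
    j ≤ (c w w' : ℕ) := by
  by_contra hlt
  push_neg at hlt
  obtain ⟨⟨p, hpinj, hp0, hpfix, hpedge⟩, -⟩ := hg w' (c w w')
  -- w is not on the path p (else we get a cycle)
  have hwnot : ∀ t : Fin (g w' (c w w') + 1), p t ≠ w := by
    intro t ht
    apply hacyc
    refine ⟨t.val, fun i => p ⟨i.val, i.isLt.trans_le (Nat.succ_le_succ t.is_le)⟩,
      ?_, ?_, ?_⟩
    · intro a b hab
      have h2 := hpinj hab
      rw [Fin.mk.injEq] at h2
      exact Fin.ext h2
    · intro i
      have hi : (i : ℕ) < g w' (c w w') := lt_of_lt_of_le i.isLt t.is_le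
      have h := (hpedge ⟨i.val, hi⟩).1
      convert h using 2 <;> exact Fin.ext rfl
    · have h1 : (⟨(Fin.last t.val).val, (Fin.last t.val).isLt.trans_le
          (Nat.succ_le_succ t.is_le)⟩ : Fin (g w' (c w w') + 1)) = t := Fin.ext rfl
      have h2 : (⟨((0 : Fin (t.val + 1))).val, (0 : Fin (t.val+1)).isLt.trans_le
          (Nat.succ_le_succ t.is_le)⟩ : Fin (g w' (c w w') + 1)) = 0 := Fin.ext rfl
      simp only [h1, h2, ht, hp0]
      exact hww'
  -- extend p by prepending w
  have key : g w' (c w w') + 1 ≤ g w (c w w') := by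
    refine (hg w (c w w')).2 (g w' (c w w') + 1) ⟨fun i => Fin.cases (motive := fun _ => V) w p i, ?_, rfl, ?_, ?_⟩
    · intro a b hab
      induction a using Fin.cases with
      | zero =>
        induction b using Fin.cases with
        | zero => rfl
        | succ b =>
          simp only [Fin.cases_zero, Fin.cases_succ] at hab
          exact absurd hab.symm (hwnot b)
      | succ a =>
        induction b using Fin.cases with
        | zero =>
          simp only [Fin.cases_zero, Fin.cases_succ] at hab
          exact absurd hab (hwnot a)
        | succ b =>
          simp only [Fin.cases_succ] at hab
          rw [hpinj hab]
    · intro t m' hm'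
      induction t using Fin.cases with
      | zero => rfl
      | succ t =>
        simp only [Fin.cases_succ]
        have hm'j : (m' : ℕ) < j := lt_trans (Fin.lt_iff_val_lt_val.mp hm') hlt
        rw [hpfix t m' hm', ← hagree m' hm'j]
    · intro t
      induction t using Fin.cases with
      | zero =>
        have e1 : ((0 : Fin (g w' (c w w') + 1)).castSucc)
            = (0 : Fin (g w' (c w w') + 2)) := rfl
        have e2 : (0 : Fin (g w' (c w w') + 1)).succ
            = ((0 : Fin (g w' (c w w') + 1))).succ := rfl
        rw [e1]
        simp only [Fin.cases_zero, Fin.cases_succ, hp0]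
        exact ⟨hww', trivial⟩
      | succ t =>
        rw [← Fin.succ_castSucc]
        simp only [Fin.cases_succ]
        exact hpedge t
  have heq : g w (c w w') = g w' (c w w') := hagree (c w w') hlt
  omega
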